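/- arXiv:1009.3248 — 2 statements merged into one kernel-verified Lean document; each statement's English description precedes it below -/
import Mathlib

section
/- If ν is a probability measure on (M, 𝓕) which is φ-invariant (ν ∘ φ^{−1} = ν) and absolutely continuous with respect to ω, and if the entropy production observable σ belongs to L¹(M, dν), then ∫_M σ dν = 0. -/
/-!
With `g := dν/dω`, the chain rule for Radon–Nikodym derivatives and the `φ`-invariance of `ν`
give `g · (Δ¹ ∘ φ) = g ∘ φ` `ν`-a.e., so `σ = log (g ∘ φ) - log g` is a coboundary. An integrable
coboundary `a ∘ φ - a` has zero integral against an invariant probability measure even when `a`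
itself is not integrable: truncate `a` at level `n`, where the integral vanishes by invariance,
and pass to the limit by dominated convergence, since truncation is `1`-Lipschitz.
-/

open MeasureTheory Filter Topology

/-- The entropy production observable `σ := (log Δ^1) ∘ φ` where
`Δ^1 := d(ω∘φ^{-1})/dω` and `T n` is `φ^n`. -/
noncomputable def entProd {M : Type*} [MeasurableSpace M] (ω : Measure M) (T : ℤ → M → M)
    (x : M) : ℝ :=
  Real.log (((ω.map (T 1)).rnDeriv ω (T 1 x)).toReal)

lemma abs_clamp_sub_clamp_le (a b c : ℝ) :
    |max (min a c) (-c) - max (min b c) (-c)| ≤ |a - b| :=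
  (abs_max_sub_max_le_abs _ _ _).trans <| (abs_min_sub_min_le_max a c b c).trans <| by simp

lemma abs_clamp_le_of_nonneg {c : ℝ} (hc : 0 ≤ c) (a : ℝ) : |max (min a c) (-c)| ≤ c :=
  abs_le.2 ⟨le_max_right _ _, max_le (min_le_right _ _) (by linarith)⟩

lemma tendsto_clamp_atTop (a : ℝ) :
    Tendsto (fun n : ℕ => max (min a n) (-(n : ℝ))) atTop (𝓝 a) := by
  refine tendsto_nhds_of_eventually_eq ?_
  filter_upwards [eventually_ge_atTop ⌈|a|⌉₊] with n hn
  obtain ⟨hlo, hhi⟩ := abs_le.1 ((Nat.le_ceil |a|).trans (Nat.cast_le.2 hn))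
  rw [min_eq_left hhi, max_eq_left hlo]

lemma MeasureTheory.MeasurePreserving.integral_eq_zero_of_ae_eq_comp_sub
    {M : Type*} [MeasurableSpace M] {ν : Measure M} [IsFiniteMeasure ν] {S : M → M}
    (hS : MeasurePreserving S ν ν) {a u : M → ℝ} (ha : Measurable a) (hu : Integrable u ν)
    (hua : ∀ᵐ x ∂ν, u x = a (S x) - a x) :
    ∫ x, u x ∂ν = 0 := by
  set A : ℕ → M → ℝ := fun n x => max (min (a x) n) (-(n : ℝ))
  have hA_meas : ∀ n, Measurable (A n) := fun n =>
    (ha.min measurable_const).max measurable_const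
  have hA_int : ∀ n, Integrable (A n) ν := fun n =>
    (integrable_const (n : ℝ)).mono' (hA_meas n).aestronglyMeasurable
      (ae_of_all _ fun x => abs_clamp_le_of_nonneg n.cast_nonneg (a x))
  have h_trunc : ∀ n, ∫ x, (A n (S x) - A n x) ∂ν = 0 := fun n => by
    have h_inv : ∫ x, A n (S x) ∂ν = ∫ x, A n x ∂ν := by
      rw [← integral_map hS.aemeasurable (hA_meas n).aestronglyMeasurable, hS.map_eq]
    rw [integral_sub (f := fun x => A n (S x)) (hS.integrable_comp_of_integrable (hA_int n))
      (hA_int n), h_inv, sub_self]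
  have h_lim : Tendsto (fun n => ∫ x, (A n (S x) - A n x) ∂ν) atTop (𝓝 (∫ x, u x ∂ν)) := by
    refine tendsto_integral_of_dominated_convergence (fun x => |u x|)
      (fun n => ((hA_meas n).comp hS.measurable).sub (hA_meas n) |>.aestronglyMeasurable)
      hu.abs (fun n => ?_) ?_
    · filter_upwards [hua] with x hx
      rw [Real.norm_eq_abs, hx]
      exact abs_clamp_sub_clamp_le _ _ _
    · filter_upwards [hua] with x hx
      rw [hx]
      exact (tendsto_clamp_atTop _).sub (tendsto_clamp_atTop _)
  simp only [h_trunc] at h_lim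
  exact tendsto_nhds_unique h_lim tendsto_const_nhds

lemma measurableEmbedding_flow {M : Type*} [MeasurableSpace M] {T : ℤ → M → M}
    (hT0 : T 0 = id) (hTadd : ∀ n m : ℤ, T (n + m) = T n ∘ T m)
    (hTmeas : ∀ n : ℤ, Measurable (T n)) (n : ℤ) :
    MeasurableEmbedding (T n) :=
  have h_inv : ∀ k, T (-k) ∘ T k = id := fun k => by rw [← hTadd, neg_add_cancel, hT0]
  let e : M ≃ᵐ M :=
    { toFun := T n
      invFun := T (-n)
      left_inv := congrFun (h_inv n)
      right_inv := fun x => by simpa using congrFun (h_inv (-n)) x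
      measurable_toFun := hTmeas n
      measurable_invFun := hTmeas (-n) }
  e.measurableEmbedding

section RadonNikodym

variable {M : Type*} [MeasurableSpace M] {ν ω : Measure M} [SigmaFinite ν] [SigmaFinite ω]
  {f : M → M}

lemma MeasureTheory.Measure.rnDeriv_mul_rnDeriv_map_comp_ae_eq (hf : MeasurableEmbedding f)
    (hν : MeasurePreserving f ν ν) (hνω : ν ≪ ω) (hω : ω ≪ ω.map f) :
    ∀ᵐ x ∂ν, ν.rnDeriv ω x * (ω.map f).rnDeriv ω (f x) = ν.rnDeriv ω (f x) := by
  have : SigmaFinite (ω.map f) := hf.sigmaFinite_map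
  have h_chain : ∀ᵐ y ∂ν, ν.rnDeriv (ω.map f) y * (ω.map f).rnDeriv ω y = ν.rnDeriv ω y :=
    hνω.ae_le (Measure.rnDeriv_mul_rnDeriv (hνω.trans hω))
  have h_map : ∀ᵐ x ∂ν, ν.rnDeriv (ω.map f) (f x) = ν.rnDeriv ω x := by
    have h := hf.rnDeriv_map ν ω
    rw [hν.map_eq] at h
    exact hνω.ae_le h
  filter_upwards [hν.quasiMeasurePreserving.ae h_chain, h_map] with x h_chain_fx h_map_x
  rw [← h_map_x, h_chain_fx]

lemma MeasureTheory.Measure.log_toReal_rnDeriv_map_comp_ae_eq (hf : MeasurableEmbedding f)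
    (hν : MeasurePreserving f ν ν) (hνω : ν ≪ ω) (hω : ω ≪ ω.map f) :
    ∀ᵐ x ∂ν, Real.log ((ω.map f).rnDeriv ω (f x)).toReal
      = Real.log (ν.rnDeriv ω (f x)).toReal - Real.log (ν.rnDeriv ω x).toReal := by
  have h_pos : ∀ᵐ x ∂ν, 0 < (ν.rnDeriv ω x).toReal := by
    filter_upwards [Measure.rnDeriv_pos hνω, hνω.ae_le (Measure.rnDeriv_ne_top ν ω)]
      with x h_pos h_ne_top
    exact ENNReal.toReal_pos h_pos.ne' h_ne_top
  filter_upwards [rnDeriv_mul_rnDeriv_map_comp_ae_eq hf hν hνω hω, h_pos,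
    hν.quasiMeasurePreserving.ae h_pos] with x h_mul h_pos_x h_pos_fx
  replace h_mul := congrArg ENNReal.toReal h_mul
  rw [ENNReal.toReal_mul] at h_mul
  have h_ne_zero : ((ω.map f).rnDeriv ω (f x)).toReal ≠ 0 :=
    right_ne_zero_of_mul (h_mul ▸ h_pos_fx.ne')
  rw [eq_sub_iff_add_eq', ← Real.log_mul h_pos_x.ne' h_ne_zero, h_mul]

end RadonNikodym

/-- If `ν` is a `φ`-invariant probability measure, absolutely continuous w.r.t. `ω`, and the
entropy production observable `σ` is `ν`-integrable, then `ν(σ) = 0`. -/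
theorem invariant_normal_state_entropy_production_zero
    {M : Type*} [MeasurableSpace M] (ω : Measure M) [IsProbabilityMeasure ω]
    (T : ℤ → M → M)
    (hT0 : T 0 = id)
    (hTadd : ∀ n m : ℤ, T (n + m) = T n ∘ T m)
    (hTmeas : ∀ n : ℤ, Measurable (T n))
    (hequiv : ∀ n : ℤ, ω.map (T n) ≪ ω ∧ ω ≪ ω.map (T n))
    (ν : Measure M) [IsProbabilityMeasure ν]
    (hinv : ν.map (T 1) = ν)
    (hac : ν ≪ ω)
    (hint : Integrable (fun x => entProd ω T x) ν) :
    ∫ x, entProd ω T x ∂ν = 0 := by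
  have hφ : MeasurePreserving (T 1) ν ν := ⟨hTmeas 1, hinv⟩
  have h_log_meas : Measurable fun x => Real.log (ν.rnDeriv ω x).toReal :=
    (Measure.measurable_rnDeriv ν ω).ennreal_toReal.log
  exact hφ.integral_eq_zero_of_ae_eq_comp_sub h_log_meas hint
    (Measure.log_toReal_rnDeriv_map_comp_ae_eq (measurableEmbedding_flow hT0 hTadd hTmeas 1)
      hφ hac (hequiv 1).2)
end

section
/- Suppose there exists a φ-invariant probability measure ν on (M, 𝓕) with ν ≪ ω and σ ∈ L¹(M, dν). If there exist a strictly increasing sequence (t_n) of positive integers and a real number s⁺ such that lim_{n→∞} (1/t_n) Σ_{s=0}^{t_n−1} σ(φ^s(x)) = s⁺ for ω-a.e. x ∈ M, then s⁺ = 0. -/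
open MeasureTheory Filter Finset

section Dynamics

variable {M : Type*}

section Flow

variable {T : ℤ → M → M}

theorem flow_natCast_eq_iterate (hT0 : T 0 = id) (hTadd : ∀ n m : ℤ, T (n + m) = T n ∘ T m) :
    ∀ n : ℕ, T n = (T 1)^[n]
  | 0 => hT0
  | n + 1 => by
    rw [Function.iterate_succ', ← flow_natCast_eq_iterate hT0 hTadd n, ← hTadd, Nat.cast_succ,
      add_comm]

variable [MeasurableSpace M]

def flowTimeOne (hT0 : T 0 = id) (hTadd : ∀ n m : ℤ, T (n + m) = T n ∘ T m)
    (hTmeas : ∀ n : ℤ, Measurable (T n)) : M ≃ᵐ M where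
  toFun := T 1
  invFun := T (-1)
  left_inv x := by
    rw [← Function.comp_apply (f := T (-1)), ← hTadd, neg_add_cancel, hT0, id]
  right_inv x := by
    rw [← Function.comp_apply (f := T 1), ← hTadd, add_neg_cancel, hT0, id]
  measurable_toFun := hTmeas 1
  measurable_invFun := hTmeas (-1)

end Flow

variable [MeasurableSpace M]

section Cocycle

variable {ω ν : Measure M} [SigmaFinite ω] [SigmaFinite ν] (e : M ≃ᵐ M)

theorem ae_rnDeriv_mul_rnDeriv_map_comp_eq (hinv : ν.map e = ν) (hac : ν ≪ ω) :
    ∀ᵐ x ∂ν, ν.rnDeriv ω x * (ω.map e).rnDeriv ω (e x) = ν.rnDeriv ω (e x) := by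
  have hmp : MeasurePreserving e ν ν := ⟨e.measurable, hinv⟩
  have : SigmaFinite (ω.map e) := e.measurableEmbedding.sigmaFinite_map
  have hchain : ∀ᵐ y ∂ν, ν.rnDeriv (ω.map e) y * (ω.map e).rnDeriv ω y = ν.rnDeriv ω y :=
    hac.ae_le (Measure.rnDeriv_mul_rnDeriv (hinv ▸ hac.map e.measurable))
  have hmap : ∀ᵐ x ∂ν, ν.rnDeriv (ω.map e) (e x) = ν.rnDeriv ω x := by
    have h := e.measurableEmbedding.rnDeriv_map ν ω
    rw [hinv] at h
    exact hac.ae_le h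
  filter_upwards [hmp.quasiMeasurePreserving.ae hchain, hmap] with x hx hx'
  rw [← hx', hx]

theorem ae_log_rnDeriv_map_comp_eq_sub (hinv : ν.map e = ν) (hac : ν ≪ ω) :
    ∀ᵐ x ∂ν, Real.log ((ω.map e).rnDeriv ω (e x)).toReal
      = Real.log (ν.rnDeriv ω (e x)).toReal - Real.log (ν.rnDeriv ω x).toReal := by
  have hmp : MeasurePreserving e ν ν := ⟨e.measurable, hinv⟩
  have hpos : ∀ᵐ x ∂ν, 0 < (ν.rnDeriv ω x).toReal := by
    filter_upwards [Measure.rnDeriv_pos hac, hac.ae_le (Measure.rnDeriv_lt_top ν ω)]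
      with x h0 htop
    exact ENNReal.toReal_pos h0.ne' htop.ne
  filter_upwards [ae_rnDeriv_mul_rnDeriv_map_comp_eq e hinv hac, hpos,
    hmp.quasiMeasurePreserving.ae hpos] with x hx hx0 hex0
  rw [← hx, ENNReal.toReal_mul] at hex0 ⊢
  rw [Real.log_mul hx0.ne' (pos_of_mul_pos_right hex0 hx0.le).ne']
  ring

end Cocycle

theorem ae_sum_range_comp_iterate_eq_sub {ν : Measure M} {φ : M → M}
    (hφ : Measure.QuasiMeasurePreserving φ ν ν) {f L : M → ℝ} (hf : ∀ᵐ x ∂ν, f x = L (φ x) - L x) :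
    ∀ᵐ x ∂ν, ∀ n, ∑ s ∈ range n, f (φ^[s] x) = L (φ^[n] x) - L x := by
  have hstep : ∀ᵐ x ∂ν, ∀ s, f (φ^[s] x) = L (φ^[s + 1] x) - L (φ^[s] x) :=
    ae_all_iff.2 fun s => by
      filter_upwards [(hφ.iterate s).ae hf] with x hx
      rw [hx, Function.iterate_succ_apply']
  filter_upwards [hstep] with x hx n
  rw [sum_congr rfl fun s _ => hx s, sum_range_sub (fun s => L (φ^[s] x))]
  rfl

section Tightness

variable {ι : Type*} {l : Filter ι} [l.IsCountablyGenerated] {μ : Measure M} [IsFiniteMeasure μ]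
  {g : ι → M → M}

theorem measure_eq_zero_of_ae_eventually_notMem [l.NeBot] (hg : ∀ i, MeasurePreserving (g i) μ μ)
    {s : Set M} (hs : MeasurableSet s) (h : ∀ᵐ x ∂μ, ∀ᶠ i in l, g i x ∉ s) : μ s = 0 := by
  have hlim := tendsto_measure_of_ae_tendsto_indicator_of_isFiniteMeasure l
    MeasurableSet.empty (fun i => hs.preimage (hg i).measurable)
    (h.mono fun x hx => hx.mono fun i hi => by simpa using hi)
  simp only [(hg _).measure_preimage hs.nullMeasurableSet, measure_empty] at hlim
  exact tendsto_nhds_unique tendsto_const_nhds hlim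

theorem not_ae_tendsto_abs_atTop [l.NeBot] [NeZero μ] (hg : ∀ i, MeasurePreserving (g i) μ μ)
    {L : M → ℝ} (hL : Measurable L) : ¬ ∀ᵐ x ∂μ, Tendsto (fun i => |L (g i x)|) l atTop := by
  intro h
  have hnull : ∀ k : ℕ, μ {x | |L x| ≤ k} = 0 := fun k =>
    measure_eq_zero_of_ae_eventually_notMem hg (measurableSet_le hL.abs measurable_const)
      (h.mono fun x hx => (hx.eventually_gt_atTop (k : ℝ)).mono fun i hi => not_le.2 hi)
  have hcover : ⋃ k : ℕ, {x | |L x| ≤ k} = Set.univ :=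
    Set.eq_univ_of_forall fun x => Set.mem_iUnion.2 (exists_nat_ge |L x|)
  exact NeZero.ne μ (Measure.measure_univ_eq_zero.1 (hcover ▸ measure_iUnion_null hnull))

end Tightness

theorem tendsto_abs_atTop_of_tendsto_inv_mul {ι : Type*} {l : Filter ι} {a b : ι → ℝ} {c : ℝ}
    (ha : Tendsto a l atTop) (hb : Tendsto (fun i => (a i)⁻¹ * b i) l (nhds c)) (hc : c ≠ 0) :
    Tendsto (fun i => |b i|) l atTop := by
  refine (ha.atTop_mul_pos (abs_pos.2 hc) hb.abs).congr' ?_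
  filter_upwards [ha.eventually_gt_atTop 0] with i hi
  rw [abs_mul, abs_inv, abs_of_pos hi, mul_inv_cancel_left₀ hi.ne']

end Dynamics

theorem mean_entropy_production_vanishes_general
    {M : Type*} [MeasurableSpace M] (ω : Measure M) [IsProbabilityMeasure ω]
    (T : ℤ → M → M)
    (hT0 : T 0 = id)
    (hTadd : ∀ n m : ℤ, T (n + m) = T n ∘ T m)
    (hTmeas : ∀ n : ℤ, Measurable (T n))
    (ν : Measure M) [IsProbabilityMeasure ν]
    (hinv : ν.map (T 1) = ν)
    (hac : ν ≪ ω)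
    (t : ℕ → ℕ) (htmono : StrictMono t)
    (splus : ℝ)
    (hconv : ∀ᵐ x ∂ω, Tendsto
      (fun n : ℕ => (t n : ℝ)⁻¹ * ∑ s ∈ Finset.range (t n), entProd ω T (T (s : ℤ) x))
      atTop (nhds splus)) :
    splus = 0 := by
  set e := flowTimeOne hT0 hTadd hTmeas
  have hmp : MeasurePreserving e ν ν := ⟨e.measurable, hinv⟩
  set L : M → ℝ := fun x => Real.log (ν.rnDeriv ω x).toReal
  have hsum : ∀ᵐ x ∂ν, ∀ n : ℕ, ∑ s ∈ range n, entProd ω T (T s x) = L (e^[n] x) - L x := by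
    simp only [flow_natCast_eq_iterate hT0 hTadd]
    exact ae_sum_range_comp_iterate_eq_sub hmp.quasiMeasurePreserving
      (ae_log_rnDeriv_map_comp_eq_sub e hinv hac)
  have ht : Tendsto (fun n => (t n : ℝ)) atTop atTop :=
    tendsto_natCast_atTop_atTop.comp htmono.tendsto_atTop
  by_contra hs
  refine not_ae_tendsto_abs_atTop (l := atTop) (fun n => hmp.iterate (t n))
    (Measure.measurable_rnDeriv ν ω).ennreal_toReal.log ?_
  filter_upwards [hac.ae_le hconv, hsum] with x hx hsx
  have hshift : Tendsto (fun n => (t n : ℝ)⁻¹ * L x) atTop (nhds 0) := by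
    simpa using (tendsto_inv_atTop_zero.comp ht).mul_const (L x)
  refine tendsto_abs_atTop_of_tendsto_inv_mul ht ?_ hs
  simpa [hsx, mul_sub] using hx.add hshift

/-- If there exists a `φ`-invariant probability measure `ν ≪ ω` with `σ ∈ L¹(ν)`, and the
ergodic averages `(1/t_n) Σ_{s<t_n} σ∘φ^s` converge ω-a.e. to a constant `s⁺` along a
strictly increasing sequence of positive integers, then `s⁺ = 0`. -/
theorem mean_entropy_production_vanishes
    {M : Type*} [MeasurableSpace M] (ω : Measure M) [IsProbabilityMeasure ω]
    (T : ℤ → M → M)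
    (hT0 : T 0 = id)
    (hTadd : ∀ n m : ℤ, T (n + m) = T n ∘ T m)
    (hTmeas : ∀ n : ℤ, Measurable (T n))
    (hequiv : ∀ n : ℤ, ω.map (T n) ≪ ω ∧ ω ≪ ω.map (T n))
    (ν : Measure M) [IsProbabilityMeasure ν]
    (hinv : ν.map (T 1) = ν)
    (hac : ν ≪ ω)
    (hint : Integrable (fun x => entProd ω T x) ν)
    (t : ℕ → ℕ) (htmono : StrictMono t) (htpos : ∀ n, 0 < t n)
    (splus : ℝ)
    (hconv : ∀ᵐ x ∂ω, Tendsto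
      (fun n : ℕ => (t n : ℝ)⁻¹ * ∑ s ∈ Finset.range (t n), entProd ω T (T (s : ℤ) x))
      atTop (nhds splus)) :
    splus = 0 :=
  mean_entropy_production_vanishes_general ω T hT0 hTadd hTmeas ν hinv hac t htmono splus hconv
end
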